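/- arXiv:2103.09587 — 2 statements merged into one kernel-verified Lean document; each statement's English description precedes it below -/
import Mathlib

section
/- For all languages U, V over an alphabet Σ, (U ⧢ V^{⧢,*})^{⧢,*} = (U ⧢ (U ∪ V)^{⧢,*}) ∪ {ε}. -/
/-- `IsShuffle u v w` means `w` is an interleaving (shuffle) of `u` and `v`,
i.e. `w = x₁y₁⋯xₙyₙ` with `u = x₁⋯xₙ` and `v = y₁⋯yₙ`. -/
inductive IsShuffle {α : Type*} : List α → List α → List α → Prop
  | nil : IsShuffle [] [] []
  | left {a : α} {u v w : List α} : IsShuffle u v w → IsShuffle (a :: u) v (a :: w)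
  | right {a : α} {u v w : List α} : IsShuffle u v w → IsShuffle u (a :: v) (a :: w)

/-- Shuffle of two languages: `U ⧢ V = ⋃_{x∈U, y∈V} (x ⧢ y)`. -/
def Language.shuffle {α : Type*} (U V : Language α) : Language α :=
  { w | ∃ u ∈ U, ∃ v ∈ V, IsShuffle u v w }

/-- The `n`-fold shuffle of a language with itself (`0`-fold is `{ε}`). -/
def Language.shufflePow {α : Type*} (L : Language α) : ℕ → Language α
  | 0 => 1
  | n + 1 => (L.shufflePow n).shuffle L

/-- Iterated shuffle (shuffle closure): `L^{⧢,*} = ⋃_{n ≥ 0} L^{⧢,n}`. -/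
def Language.shuffleStar {α : Type*} (L : Language α) : Language α :=
  { w | ∃ n, w ∈ L.shufflePow n }

/-- Commutative (permutation) closure: all words with the same letter counts
as some word of `L`. -/
def Language.perm {α : Type*} [DecidableEq α] (L : Language α) : Language α :=
  { u | ∃ w ∈ L, ∀ a : α, u.count a = w.count a }

instance {α : Type*} : Union (Language α) := ⟨fun U V => { w | w ∈ U ∨ w ∈ V }⟩
instance {α : Type*} : Inter (Language α) := ⟨fun U V => { w | w ∈ U ∧ w ∈ V }⟩
instance {α : Type*} : EmptyCollection (Language α) := ⟨{ w | False }⟩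

/-! A word of `(U ⧢ V^{⧢,*})^{⧢,*}` other than `ε` is a shuffle of factors `uᵢ ⧢ sᵢ` with
`uᵢ ∈ U` and `sᵢ ∈ V^{⧢,*}`; keeping the first `u₁` apart and merging everything else gives a word
of `U ⧢ (U ∪ V)^{⧢,*}`. Conversely `(U ∪ V)^{⧢,*} ⊆ U^{⧢,*} ⧢ V^{⧢,*}` since shuffle is
associative and commutative, so `U ⧢ (U ∪ V)^{⧢,*} ⊆ U^{⧢,*} ⧢ (U ⧢ V^{⧢,*})`, and both factors
lie in `(U ⧢ V^{⧢,*})^{⧢,*}` because `U ⊆ U ⧢ V^{⧢,*}`. -/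

namespace IsShuffle

variable {α : Type*}

theorem symm {u v w : List α} (h : IsShuffle u v w) : IsShuffle v u w := by
  induction h with
  | nil => exact .nil
  | left _ ih => exact .right ih
  | right _ ih => exact .left ih

theorem eq_of_nil_left : ∀ {v w : List α}, IsShuffle [] v w → w = v
  | _, _, .nil => rfl
  | _, _, .right h => by rw [eq_of_nil_left h]

theorem nil_right : ∀ u : List α, IsShuffle u [] u
  | [] => .nil
  | _ :: u => .left (nil_right u)

theorem assoc {x c w : List α} (hxc : IsShuffle x c w) :
    ∀ {a b : List α}, IsShuffle a b x → ∃ y, IsShuffle b c y ∧ IsShuffle a y w := by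
  induction hxc with
  | nil =>
    rintro a b ⟨⟩
    exact ⟨[], .nil, .nil⟩
  | left _ ih =>
    intro a b hab
    cases hab with
    | left hab =>
      obtain ⟨y, hbc, hay⟩ := ih hab
      exact ⟨y, hbc, .left hay⟩
    | right hab =>
      obtain ⟨y, hbc, hay⟩ := ih hab
      exact ⟨_ :: y, .left hbc, .right hay⟩
  | right _ ih =>
    intro a b hab
    obtain ⟨y, hbc, hay⟩ := ih hab
    exact ⟨_ :: y, .right hbc, .right hay⟩

end IsShuffle

namespace Language

variable {α : Type*}

theorem shuffle_comm (U V : Language α) : U.shuffle V = V.shuffle U := by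
  ext w
  constructor <;> rintro ⟨u, hu, v, hv, h⟩ <;> exact ⟨v, hv, u, hu, h.symm⟩

theorem shuffle_assoc (A B C : Language α) :
    (A.shuffle B).shuffle C = A.shuffle (B.shuffle C) := by
  ext w
  constructor
  · rintro ⟨x, ⟨a, ha, b, hb, hab⟩, c, hc, hxc⟩
    obtain ⟨y, hbc, hay⟩ := hxc.assoc hab
    exact ⟨a, ha, y, ⟨b, hb, c, hc, hbc⟩, hay⟩
  · rintro ⟨a, ha, y, ⟨b, hb, c, hc, hbc⟩, hay⟩
    obtain ⟨x, hba, hcw⟩ := hay.symm.assoc hbc.symm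
    exact ⟨x, ⟨a, ha, b, hb, hba.symm⟩, c, hc, hcw.symm⟩

theorem shuffle_one (L : Language α) : L.shuffle 1 = L := by
  ext w
  constructor
  · rintro ⟨u, hu, _, rfl, h⟩
    rwa [h.symm.eq_of_nil_left]
  · exact fun hw => ⟨w, hw, [], rfl, .nil_right w⟩

theorem shuffle_mono {A B C D : Language α} (hAC : A ≤ C) (hBD : B ≤ D) :
    A.shuffle B ≤ C.shuffle D := by
  rintro w ⟨u, hu, v, hv, h⟩
  exact ⟨u, hAC hu, v, hBD hv, h⟩

theorem shufflePow_add (L : Language α) (m n : ℕ) :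
    L.shufflePow (m + n) = (L.shufflePow m).shuffle (L.shufflePow n) := by
  induction n with
  | zero => exact (shuffle_one _).symm
  | succ n ih =>
    show (L.shufflePow (m + n)).shuffle L = _
    rw [ih, shuffle_assoc]
    rfl

theorem shufflePow_mono {A B : Language α} (h : A ≤ B) (n : ℕ) :
    A.shufflePow n ≤ B.shufflePow n := by
  induction n with
  | zero => exact le_rfl
  | succ n ih => exact shuffle_mono ih h

theorem shuffleStar_mono {A B : Language α} (h : A ≤ B) : A.shuffleStar ≤ B.shuffleStar :=
  fun _ ⟨n, hn⟩ => ⟨n, shufflePow_mono h n hn⟩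

theorem nil_mem_shuffleStar (L : Language α) : [] ∈ L.shuffleStar :=
  ⟨0, rfl⟩

theorem le_shuffleStar (L : Language α) : L ≤ L.shuffleStar :=
  fun w hw => ⟨1, [], rfl, w, hw, (IsShuffle.nil_right w).symm⟩

theorem shuffleStar_shuffle_le (L : Language α) : L.shuffleStar.shuffle L ≤ L.shuffleStar := by
  rintro w ⟨x, ⟨n, hx⟩, a, ha, h⟩
  exact ⟨n + 1, x, hx, a, ha, h⟩

theorem shuffleStar_shuffle_self_le (L : Language α) :
    L.shuffleStar.shuffle L.shuffleStar ≤ L.shuffleStar := by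
  rintro w ⟨x, ⟨m, hx⟩, y, ⟨n, hy⟩, h⟩
  exact ⟨m + n, by rw [shufflePow_add]; exact ⟨x, hx, y, hy, h⟩⟩

theorem shuffleStar_le_of_shuffle_le {L R : Language α} (hR : [] ∈ R)
    (h : R.shuffle L ≤ R) : L.shuffleStar ≤ R := by
  rintro w ⟨n, hw⟩
  induction n generalizing w with
  | zero => rwa [show w = [] from hw]
  | succ n ih => exact h (shuffle_mono (fun _ hx => ih hx) le_rfl hw)

theorem shuffleStar_union_le (U V : Language α) :
    (U ∪ V).shuffleStar ≤ U.shuffleStar.shuffle V.shuffleStar := by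
  refine shuffleStar_le_of_shuffle_le
    ⟨[], U.nil_mem_shuffleStar, [], V.nil_mem_shuffleStar, .nil⟩ ?_
  rintro w ⟨x, hx, a, ha | ha, h⟩
  · have hw : w ∈ (U.shuffleStar.shuffle V.shuffleStar).shuffle U := ⟨x, hx, a, ha, h⟩
    rw [shuffle_assoc, shuffle_comm V.shuffleStar, ← shuffle_assoc] at hw
    exact shuffle_mono U.shuffleStar_shuffle_le le_rfl hw
  · have hw : w ∈ (U.shuffleStar.shuffle V.shuffleStar).shuffle V := ⟨x, hx, a, ha, h⟩
    rw [shuffle_assoc] at hw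
    exact shuffle_mono le_rfl V.shuffleStar_shuffle_le hw

theorem shuffleStar_shuffle_shuffleStar_le (U V : Language α) :
    (U.shuffle V.shuffleStar).shuffleStar ≤ U.shuffle (U ∪ V).shuffleStar ∪ {[]} := by
  set S := (U ∪ V).shuffleStar
  have hV : V.shuffleStar ≤ S := shuffleStar_mono fun _ => Or.inr
  have hW : U.shuffle V.shuffleStar ≤ S :=
    (shuffle_mono (fun _ hu => le_shuffleStar _ (Or.inl hu)) hV).trans
      (shuffleStar_shuffle_self_le _)
  refine shuffleStar_le_of_shuffle_le (Or.inr rfl) ?_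
  rintro w ⟨x, hx | rfl, y, hy, h⟩
  · have hw : w ∈ (U.shuffle S).shuffle S := ⟨x, hx, y, hW hy, h⟩
    rw [shuffle_assoc] at hw
    exact Or.inl (shuffle_mono le_rfl (shuffleStar_shuffle_self_le _) hw)
  · rw [h.eq_of_nil_left]
    exact Or.inl (shuffle_mono le_rfl hV hy)

theorem shuffle_shuffleStar_union_le (U V : Language α) :
    U.shuffle (U ∪ V).shuffleStar ≤ (U.shuffle V.shuffleStar).shuffleStar := by
  set W := U.shuffle V.shuffleStar
  have hU : U ≤ W := fun u hu => ⟨u, hu, [], V.nil_mem_shuffleStar, .nil_right u⟩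
  calc U.shuffle (U ∪ V).shuffleStar
      ≤ U.shuffle (U.shuffleStar.shuffle V.shuffleStar) :=
        shuffle_mono le_rfl (shuffleStar_union_le U V)
    _ = U.shuffleStar.shuffle W := by
        rw [← shuffle_assoc, shuffle_comm U U.shuffleStar, shuffle_assoc]
    _ ≤ W.shuffleStar.shuffle W.shuffleStar :=
        shuffle_mono (shuffleStar_mono hU) (le_shuffleStar W)
    _ ≤ W.shuffleStar := shuffleStar_shuffle_self_le W

end Language

theorem shuffleStar_shuffle_shuffleStar {α : Type*} (U V : Language α) :
    (U.shuffle V.shuffleStar).shuffleStar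
      = U.shuffle (U ∪ V).shuffleStar ∪ {[]} := by
  refine le_antisymm (Language.shuffleStar_shuffle_shuffleStar_le U V) ?_
  rintro w (hw | rfl)
  · exact Language.shuffle_shuffleStar_union_le U V hw
  · exact Language.nil_mem_shuffleStar _
end

section
/- The map perm : P(Σ*) → P(Σ*) satisfies perm(U ∪ V) = perm(U) ∪ perm(V), perm(U·V) = perm(U) ⧢ perm(V), perm(∅) = ∅ and perm({ε}) = {ε}; i.e., perm is a semiring morphism from (P(Σ*), ∪, ·, ∅, {ε}) to (P(Σ*), ∪, ⧢, ∅, {ε}). -/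
/-! Equal letter counts means `List.Perm`. A shuffle of `u` and `v` is a permutation of `u ++ v`;
conversely, reading a permutation `w` of `x ++ y` letter by letter and taking each letter from
whichever of `x`, `y` still contains it exhibits `w` as a shuffle of a permutation of `x` and a
permutation of `y`. -/

namespace IsShuffle

variable {α : Type*} {u v w : List α}

theorem swap (h : IsShuffle u v w) : IsShuffle v u w := by
  induction h with
  | nil => exact .nil
  | left _ ih => exact .right ih
  | right _ ih => exact .left ih

theorem perm_append (h : IsShuffle u v w) : w.Perm (u ++ v) := by
  induction h with
  | nil => exact .nil
  | left _ ih => exact ih.cons _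
  | right _ ih => exact (ih.cons _).trans List.perm_middle.symm

end IsShuffle

theorem exists_isShuffle_of_perm_append {α : Type*} [DecidableEq α] {w x y : List α}
    (h : w.Perm (x ++ y)) : ∃ u v, u.Perm x ∧ v.Perm y ∧ IsShuffle u v w := by
  induction w generalizing x y with
  | nil =>
    obtain ⟨rfl, rfl⟩ := List.append_eq_nil_iff.mp h.nil_eq.symm
    exact ⟨[], [], .nil, .nil, .nil⟩
  | cons a w ih =>
    have take_from_left : ∀ x y : List α, a ∈ x → (a :: w).Perm (x ++ y) →
        ∃ u v, u.Perm x ∧ v.Perm y ∧ IsShuffle u v (a :: w) := by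
      intro x y hx h
      have hw : w.Perm (x.erase a ++ y) := by
        simpa [List.erase_append_left y hx] using h.erase a
      obtain ⟨u, v, hu, hv, hs⟩ := ih hw
      exact ⟨a :: u, v, (hu.cons a).trans (List.perm_cons_erase hx).symm, hv, .left hs⟩
    rcases List.mem_append.mp (h.subset List.mem_cons_self) with hx | hy
    · exact take_from_left x y hx h
    · obtain ⟨v, u, hv, hu, hs⟩ := take_from_left y x hy (h.trans List.perm_append_comm)
      exact ⟨u, v, hu, hv, hs.swap⟩

namespace Language

variable {α : Type*} [DecidableEq α]

theorem mem_perm_iff {L : Language α} {u : List α} : u ∈ L.perm ↔ ∃ w ∈ L, u.Perm w :=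
  exists_congr fun _ => and_congr_right fun _ => List.perm_iff_count.symm

theorem perm_union (U V : Language α) : (U ∪ V).perm = U.perm ∪ V.perm := by
  ext u
  show u ∈ (U ∪ V).perm ↔ u ∈ U.perm ∨ u ∈ V.perm
  simp only [mem_perm_iff]
  exact ⟨fun ⟨w, hw, hu⟩ => hw.imp (⟨w, ·, hu⟩) (⟨w, ·, hu⟩),
    fun h => h.elim (fun ⟨w, hw, hu⟩ => ⟨w, .inl hw, hu⟩) (fun ⟨w, hw, hu⟩ => ⟨w, .inr hw, hu⟩)⟩

theorem perm_mul (U V : Language α) : (U * V).perm = U.perm.shuffle V.perm := by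
  ext w
  simp only [mem_perm_iff, Language.shuffle, Language.mem_mul]
  constructor
  · rintro ⟨_, ⟨x, hx, y, hy, rfl⟩, hw⟩
    obtain ⟨u, v, hu, hv, hs⟩ := exists_isShuffle_of_perm_append hw
    exact ⟨u, ⟨x, hx, hu⟩, v, ⟨y, hy, hv⟩, hs⟩
  · rintro ⟨u, ⟨x, hx, hu⟩, v, ⟨y, hy, hv⟩, hs⟩
    exact ⟨x ++ y, ⟨x, hx, y, hy, rfl⟩, hs.perm_append.trans (hu.append hv)⟩

theorem perm_empty : (∅ : Language α).perm = ∅ := by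
  ext u
  exact ⟨fun ⟨_, hw, _⟩ => hw, False.elim⟩

theorem perm_one : (1 : Language α).perm = 1 := by
  ext u
  simp only [mem_perm_iff, Language.mem_one, exists_eq_left, List.perm_nil]

end Language

theorem perm_semiring_morphism {α : Type*} [DecidableEq α] :
    (∀ U V : Language α, (U ∪ V).perm = U.perm ∪ V.perm) ∧
    (∀ U V : Language α, (U * V).perm = U.perm.shuffle V.perm) ∧
    (∅ : Language α).perm = ∅ ∧
    (1 : Language α).perm = 1 :=
  ⟨Language.perm_union, Language.perm_mul, Language.perm_empty, Language.perm_one⟩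
end
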